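/- The discrete layered entropy is Schur concave: if pmf p majorizes pmf q (i.e., Σ_{i=1}^k p↓(i) ≥ Σ_{i=1}^k q↓(i) for all k), then Λ(p) ≤ Λ(q). -/

import Mathlib

noncomputable def lamt (i : ℕ) : ℝ :=
  ((i : ℝ) + 1) * Real.logb 2 ((i : ℝ) + 1) - (i : ℝ) * Real.logb 2 (i : ℝ)

def IsPMF {X : Type*} (p : X → ℝ) : Prop := (∀ x, 0 ≤ p x) ∧ HasSum p 1

def IsDescRearrange {X : Type*} (p : X → ℝ) (q : ℕ → ℝ) : Prop :=
  Antitone q ∧ ∀ t : ℝ, 0 < t → {x | t < p x}.ncard = {i | t < q i}.ncard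

lemma lamt_zero : lamt 0 = 0 := by simp [lamt]

lemma lamt_one : lamt 1 = 2 := by
  simp [lamt, Real.logb_self_eq_one (by norm_num : (1:ℝ) < 2)]
  norm_num

lemma lamt_le_succ (j : ℕ) : lamt j ≤ lamt (j + 1) := by
  have hx : (0:ℝ) ≤ (j:ℝ) := Nat.cast_nonneg j
  have key := Real.convexOn_mul_log.2 (Set.mem_Ici.2 hx)
    (Set.mem_Ici.2 (by linarith : (0:ℝ) ≤ (j:ℝ) + 2))
    (by norm_num : (0:ℝ) ≤ 1/2) (by norm_num : (0:ℝ) ≤ 1/2) (by norm_num)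
  have hmid : (1/2 : ℝ) • (j:ℝ) + (1/2 : ℝ) • ((j:ℝ)+2) = (j:ℝ) + 1 := by
    simp [smul_eq_mul]; ring
  rw [hmid] at key
  simp only [smul_eq_mul] at key
  have hlog2 : (0:ℝ) < Real.log 2 := Real.log_pos (by norm_num)
  simp only [lamt, Real.logb]
  push_cast
  have h2 : (↑j + 2 : ℝ) = ↑j + 1 + 1 := by ring
  rw [h2] at key
  simp only [← mul_div_assoc, ← sub_div]
  rw [div_le_div_iff₀ hlog2 hlog2]
  nlinarith [key]

lemma lamt_mono : Monotone lamt := monotone_nat_of_le_succ lamt_le_succ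

lemma lamt_nonneg (i : ℕ) : 0 ≤ lamt i := lamt_zero ▸ lamt_mono (Nat.zero_le i)

lemma two_le_lamt {i : ℕ} (h : 1 ≤ i) : 2 ≤ lamt i := lamt_one ▸ lamt_mono h

lemma level_finite {Z : Type*} {f : Z → ℝ} (hs : Summable f) {t : ℝ} (ht : 0 < t) :
    {x | t < f x}.Finite := by
  have h1 : ∀ᶠ x in Filter.cofinite, f x < t :=
    hs.tendsto_cofinite_zero (Iio_mem_nhds ht)
  rw [Filter.eventually_cofinite] at h1
  exact h1.subset fun x hx => not_lt.2 (le_of_lt hx)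



lemma exists_pos_val {X : Type*} {q : X → ℝ} (hq : IsPMF q) : ∃ x, 0 < q x := by
  by_contra h
  push_neg at h
  have h0 : q = fun _ => 0 := funext fun x => le_antisymm (h x) (hq.1 x)
  have : HasSum q 0 := by rw [h0]; exact hasSum_zero
  exact one_ne_zero (hq.2.unique this)

lemma rearr_level_finite {X : Type*} {q : X → ℝ} {r : ℕ → ℝ} (hq : IsPMF q)
    (hcard : ∀ t : ℝ, 0 < t → {x | t < q x}.ncard = {i | t < r i}.ncard)
    {t : ℝ} (ht : 0 < t) : {i | t < r i}.Finite := by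
  by_contra h
  rw [← Set.not_infinite, not_not] at h
  obtain ⟨x₀, hx₀⟩ := exists_pos_val hq
  set s := min t (q x₀) / 2 with hs
  have hs0 : 0 < s := by positivity
  have hst : s < t := by
    have : min t (q x₀) ≤ t := min_le_left _ _
    simp only [hs]; linarith
  have hsx : s < q x₀ := by
    have : min t (q x₀) ≤ q x₀ := min_le_right _ _
    simp only [hs]; linarith
  have hinf : {i | s < r i}.Infinite := h.mono fun i hi => lt_trans hst hi
  have h0 : {i | s < r i}.ncard = 0 := hinf.ncard
  have hfin : {x | s < q x}.Finite := level_finite hq.2.summable hs0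
  have hne : {x | s < q x}.Nonempty := ⟨x₀, hsx⟩
  have := (Set.ncard_pos hfin).2 hne
  rw [hcard s hs0, h0] at this
  exact lt_irrefl 0 this

lemma stabilize {Z : Type*} {f : Z → ℝ}
    (hf : ∀ t : ℝ, 0 < t → {x | t < f x}.Finite) {v : ℝ} (hv : 0 < v) :
    ∃ t : ℝ, 0 < t ∧ t < v ∧ ∀ t' : ℝ, t ≤ t' → t' < v → {x | t' < f x} = {x | v ≤ f x} := by
  have hS : {x | v/2 < f x ∧ f x < v}.Finite :=
    (hf (v/2) (by linarith)).subset fun x hx => hx.1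
  set T : Set ℝ := insert (v/2) (f '' {x | v/2 < f x ∧ f x < v}) with hT
  have hTfin : T.Finite := (hS.image f).insert _
  have hTne : T.Nonempty := ⟨v/2, Set.mem_insert _ _⟩
  set t := sSup T with ht
  have htmem : t ∈ T := hTne.csSup_mem hTfin
  have htlt : t < v := by
    rcases htmem with h | h
    · rw [h]; linarith
    · obtain ⟨x, hx, hfx⟩ := h; rw [← hfx]; exact hx.2
  have htge : v/2 ≤ t := le_csSup hTfin.bddAbove (Set.mem_insert _ _)
  refine ⟨t, by linarith, htlt, fun t' htt' ht'v => ?_⟩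
  ext x
  simp only [Set.mem_setOf_eq]
  constructor
  · intro hx
    by_contra hlt
    push_neg at hlt
    have hx2 : v/2 < f x := by linarith
    have : f x ∈ T := Set.mem_insert_of_mem _ ⟨x, ⟨hx2, hlt⟩, rfl⟩
    have := le_csSup hTfin.bddAbove this
    linarith
  · intro hx; linarith

lemma layercake {X : Type*} {p : X → ℝ} {r : ℕ → ℝ} (hp : IsPMF p)
    (hr0 : ∀ i, 0 ≤ r i)
    (hcard : ∀ t : ℝ, 0 < t → {x | t < p x}.ncard = {i | t < r i}.ncard) :
    HasSum r 1 := by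
  have hpfin : ∀ t : ℝ, 0 < t → {x | t < p x}.Finite :=
    fun t ht => level_finite hp.2.summable ht
  have hrfin : ∀ t : ℝ, 0 < t → {i | t < r i}.Finite :=
    fun t ht => rearr_level_finite hp hcard ht
  -- equal fiber cardinalities
  have fib : ∀ v : ℝ, 0 < v →
      {x | p x = v}.Finite ∧ {i | r i = v}.Finite ∧
      {x | p x = v}.ncard = {i | r i = v}.ncard := by
    intro v hv
    obtain ⟨t₁, ht₁0, ht₁v, ht₁⟩ := stabilize hpfin hv
    obtain ⟨t₂, ht₂0, ht₂v, ht₂⟩ := stabilize hrfin hv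
    set t := max t₁ t₂ with htdef
    have htv : t < v := max_lt ht₁v ht₂v
    have ht0 : 0 < t := lt_of_lt_of_le ht₁0 (le_max_left _ _)
    have hp_eq : {x | t < p x} = {x | v ≤ p x} := ht₁ t (le_max_left _ _) htv
    have hr_eq : {i | t < r i} = {i | v ≤ r i} := ht₂ t (le_max_right _ _) htv
    have hdiffp : {x | p x = v} = {x | v ≤ p x} \ {x | v < p x} := by
      ext x; simp only [Set.mem_setOf_eq, Set.mem_diff, Set.mem_setOf_eq]
      constructor
      · intro h; exact ⟨le_of_eq h.symm, by rw [h]; exact lt_irrefl v⟩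
      · intro ⟨h1, h2⟩; exact le_antisymm (not_lt.1 h2) h1
    have hdiffr : {i | r i = v} = {i | v ≤ r i} \ {i | v < r i} := by
      ext i; simp only [Set.mem_setOf_eq, Set.mem_diff, Set.mem_setOf_eq]
      constructor
      · intro h; exact ⟨le_of_eq h.symm, by rw [h]; exact lt_irrefl v⟩
      · intro ⟨h1, h2⟩; exact le_antisymm (not_lt.1 h2) h1
    have hgev : {x | v ≤ p x}.ncard = {i | v ≤ r i}.ncard := by
      rw [← hp_eq, ← hr_eq]; exact hcard t ht0
    have hgtv : {x | v < p x}.ncard = {i | v < r i}.ncard := hcard v hv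
    have hsubp : {x | v < p x} ⊆ {x | v ≤ p x} := by intro x hx; simp only [Set.mem_setOf_eq] at *; linarith
    have hsubr : {i | v < r i} ⊆ {i | v ≤ r i} := by intro i hi; simp only [Set.mem_setOf_eq] at *; linarith
    have hfinp : {x | v ≤ p x}.Finite := hp_eq ▸ hpfin t ht0
    have hfinr : {i | v ≤ r i}.Finite := hr_eq ▸ hrfin t ht0
    refine ⟨hdiffp ▸ hfinp.diff, hdiffr ▸ hfinr.diff, ?_⟩
    rw [hdiffp, hdiffr, Set.ncard_diff hsubp (hfinp.subset hsubp),
      Set.ncard_diff hsubr (hfinr.subset hsubr), hgev, hgtv]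
  -- fiber equivalences on supports
  have fibequiv : ∀ c : ℝ,
      Nonempty ({a : {x // p x ≠ 0} // p a.1 = c} ≃ {b : {i // r i ≠ 0} // r b.1 = c}) := by
    intro c
    rcases lt_or_ge 0 c with hc | hc
    · have e1 : {a : {x // p x ≠ 0} // p a.1 = c} ≃ {x // p x = c} :=
        { toFun := fun a => ⟨a.1.1, a.2⟩
          invFun := fun x => ⟨⟨x.1, by rw [x.2]; exact ne_of_gt hc⟩, x.2⟩
          left_inv := fun a => rfl
          right_inv := fun x => rfl }
      have e2 : {b : {i // r i ≠ 0} // r b.1 = c} ≃ {i // r i = c} :=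
        { toFun := fun b => ⟨b.1.1, b.2⟩
          invFun := fun i => ⟨⟨i.1, by rw [i.2]; exact ne_of_gt hc⟩, i.2⟩
          left_inv := fun b => rfl
          right_inv := fun i => rfl }
      obtain ⟨hf1, hf2, hcc⟩ := fib c hc
      have : Finite {x // p x = c} := hf1.to_subtype
      have : Finite {i // r i = c} := hf2.to_subtype
      have hnat : Nat.card {x // p x = c} = Nat.card {i // r i = c} := by
        have := Nat.card_coe_set_eq {x | p x = c}
        have := Nat.card_coe_set_eq {i | r i = c}
        exact (Nat.card_coe_set_eq {x | p x = c}).trans (hcc.trans (Nat.card_coe_set_eq {i | r i = c}).symm)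
      have : Finite {a : {x // p x ≠ 0} // p a.1 = c} := Finite.of_equiv _ e1.symm
      have : Finite {b : {i // r i ≠ 0} // r b.1 = c} := Finite.of_equiv _ e2.symm
      have hcard2 : Nat.card {a : {x // p x ≠ 0} // p a.1 = c}
          = Nat.card {b : {i // r i ≠ 0} // r b.1 = c} := by
        rw [Nat.card_congr e1, Nat.card_congr e2, hnat]
      exact Finite.card_eq.1 hcard2
    · have h1 : IsEmpty {a : {x // p x ≠ 0} // p a.1 = c} := by
        constructor; intro a
        have := hp.1 a.1.1
        have := a.1.2
        have := a.2
        have : (0:ℝ) < p a.1.1 := lt_of_le_of_ne (hp.1 a.1.1) (Ne.symm a.1.2)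
        rw [a.2] at this; linarith
      have h2 : IsEmpty {b : {i // r i ≠ 0} // r b.1 = c} := by
        constructor; intro b
        have : (0:ℝ) < r b.1.1 := lt_of_le_of_ne (hr0 b.1.1) (Ne.symm b.1.2)
        rw [b.2] at this; linarith
      exact ⟨Equiv.equivOfIsEmpty _ _⟩
  let e : {x // p x ≠ 0} ≃ {i // r i ≠ 0} :=
    Equiv.ofFiberEquiv (f := fun a : {x // p x ≠ 0} => p a.1)
      (g := fun b : {i // r i ≠ 0} => r b.1) (fun c => (fibequiv c).some)
  have he : ∀ a, r (e a).1 = p a.1 := fun a =>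
    Equiv.ofFiberEquiv_map (f := fun a : {x // p x ≠ 0} => p a.1)
      (g := fun b : {i // r i ≠ 0} => r b.1) (fun c => (fibequiv c).some) a
  have h1 : HasSum (fun a : {x // p x ≠ 0} => p a.1) 1 :=
    (hasSum_subtype_iff_of_support_subset (Set.Subset.refl _)).2 hp.2
  have h2 : HasSum (fun b : {i // r i ≠ 0} => r b.1) 1 := by
    rw [← Equiv.hasSum_iff e]
    have : ((fun b : {i // r i ≠ 0} => r b.1) ∘ e) = fun a : {x // p x ≠ 0} => p a.1 :=
      funext fun a => he a
    rw [this]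
    exact h1
  exact (hasSum_subtype_iff_of_support_subset (Set.Subset.refl _)).1 h2

lemma key_repr (r : ℕ → ℝ) (hr0 : ∀ i, 0 ≤ r i) :
    ∑' i : ℕ, ENNReal.ofReal (r i * lamt i)
      = ∑' j : ℕ, ENNReal.ofReal (lamt (j+1) - lamt j)
          * (∑' i : ℕ, if j < i then ENNReal.ofReal (r i) else 0) := by
  have hL : ∀ i : ℕ, ENNReal.ofReal (r i * lamt i)
      = ∑ j ∈ Finset.range i, ENNReal.ofReal (r i) * ENNReal.ofReal (lamt (j+1) - lamt j) := by
    intro i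
    have h1 : lamt i = ∑ j ∈ Finset.range i, (lamt (j+1) - lamt j) := by
      rw [Finset.sum_range_sub, lamt_zero, sub_zero]
    rw [ENNReal.ofReal_mul (hr0 i), h1,
      ENNReal.ofReal_sum_of_nonneg (fun j _ => sub_nonneg.2 (lamt_le_succ j)), Finset.mul_sum]
  calc ∑' i : ℕ, ENNReal.ofReal (r i * lamt i)
      = ∑' i : ℕ, ∑' j : ℕ,
          (if j < i then ENNReal.ofReal (r i) * ENNReal.ofReal (lamt (j+1) - lamt j) else 0) := by
        refine tsum_congr fun i => ?_
        rw [hL i, tsum_eq_sum (s := Finset.range i)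
          (fun j hj => if_neg (fun h => hj (Finset.mem_range.2 h)))]
        exact Finset.sum_congr rfl fun j hj => (if_pos (Finset.mem_range.1 hj)).symm
    _ = ∑' j : ℕ, ∑' i : ℕ,
          (if j < i then ENNReal.ofReal (r i) * ENNReal.ofReal (lamt (j+1) - lamt j) else 0) :=
        ENNReal.tsum_comm
    _ = ∑' j : ℕ, ENNReal.ofReal (lamt (j+1) - lamt j)
          * (∑' i : ℕ, if j < i then ENNReal.ofReal (r i) else 0) := by
        refine tsum_congr fun j => ?_
        rw [← ENNReal.tsum_mul_left]
        refine tsum_congr fun i => ?_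
        by_cases h : j < i
        · simp [h, mul_comm]
        · simp [h]

lemma tail_eq (r : ℕ → ℝ) (hr0 : ∀ i, 0 ≤ r i) (hsum : HasSum r 1) (j : ℕ) :
    (∑ i ∈ Finset.range (j+1), ENNReal.ofReal (r i))
      + (∑' i : ℕ, if j < i then ENNReal.ofReal (r i) else 0) = 1 := by
  have htot : ∑' i : ℕ, ENNReal.ofReal (r i) = 1 := by
    rw [← ENNReal.ofReal_tsum_of_nonneg hr0 hsum.summable, hsum.tsum_eq, ENNReal.ofReal_one]
  have h1 : ∑' i : ℕ, (if i ≤ j then ENNReal.ofReal (r i) else 0)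
      = ∑ i ∈ Finset.range (j+1), ENNReal.ofReal (r i) := by
    rw [tsum_eq_sum (s := Finset.range (j+1))
      (fun i hi => if_neg (fun h => hi (Finset.mem_range.2 (Nat.lt_succ_of_le h))))]
    exact Finset.sum_congr rfl fun i hi => if_pos (Nat.lt_succ_iff.1 (Finset.mem_range.1 hi))
  rw [← h1, ← ENNReal.tsum_add, ← htot]
  refine tsum_congr fun i => ?_
  by_cases h : i ≤ j
  · simp [h, not_lt.2 h]
  · simp [h, not_le.1 h]

/-- Schur concavity: if `p` majorizes `q`
(all partial sums of the descending rearrangement of `p` dominate those of `q`),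
then `Λ(p) ≤ Λ(q)`. -/
theorem stmt6 {X Y : Type*} (p : X → ℝ) (q : Y → ℝ) (rp rq : ℕ → ℝ)
    (hp : IsPMF p) (hq : IsPMF q)
    (hrp : IsDescRearrange p rp) (hrq : IsDescRearrange q rq)
    (hmaj : ∀ k : ℕ, ∑ i ∈ Finset.range k, rq i ≤ ∑ i ∈ Finset.range k, rp i)
    (hsq : Summable (fun i => rq i * lamt i)) :
    ∑' i : ℕ, rp i * lamt i ≤ ∑' i : ℕ, rq i * lamt i := by
  obtain ⟨hpmono, hpcard⟩ := hrp
  obtain ⟨hqmono, hqcard⟩ := hrq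
  -- rq 0 is positive
  obtain ⟨x₀, hx₀⟩ := exists_pos_val hq
  have hrq0pos : 0 < rq 0 := by
    have ht : (0:ℝ) < q x₀ / 2 := by linarith
    have h1 : {x | q x₀ / 2 < q x}.Finite := level_finite hq.2.summable ht
    have hne : {x | q x₀ / 2 < q x}.Nonempty := ⟨x₀, by simp only [Set.mem_setOf_eq]; linarith⟩
    have hpos := (Set.ncard_pos h1).2 hne
    rw [hqcard _ ht] at hpos
    obtain ⟨i, hi⟩ := Set.nonempty_of_ncard_ne_zero hpos.ne'
    exact lt_of_lt_of_le (lt_trans ht hi) (hqmono (Nat.zero_le i))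
  -- rq is nonnegative
  have hrq0 : ∀ i, 0 ≤ rq i := by
    by_contra hcon
    push_neg at hcon
    obtain ⟨i₀, hi₀⟩ := hcon
    have hten := hsq.tendsto_atTop_zero
    have hmem := hten (Ioi_mem_nhds (show 2 * rq i₀ < 0 by linarith))
    rw [Filter.mem_map, Filter.mem_atTop_sets] at hmem
    obtain ⟨N, hN⟩ := hmem
    set j := max N (i₀ + 1) with hj
    have h1 : 2 * rq i₀ < rq j * lamt j := hN j (le_max_left _ _)
    have h2 : rq j ≤ rq i₀ := hqmono (le_trans (Nat.le_succ i₀) (le_max_right _ _))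
    have h3 : 2 ≤ lamt j := two_le_lamt (le_trans (Nat.le_add_left 1 i₀) (le_max_right _ _))
    nlinarith
  -- rp is nonnegative
  have hrp0 : ∀ i, 0 ≤ rp i := by
    by_contra hcon
    push_neg at hcon
    obtain ⟨i₀, hi₀⟩ := hcon
    obtain ⟨N, hN⟩ := exists_nat_gt ((∑ i ∈ Finset.range (i₀+1), rp i - rq 0) / (-rp i₀))
    have hN2 : ∑ i ∈ Finset.range (i₀+1), rp i - rq 0 < N * (-rp i₀) :=
      (div_lt_iff₀ (by linarith)).1 hN
    set n := i₀ + 1 + N with hn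
    have hsum : ∑ i ∈ Finset.range n, rp i ≤ ∑ i ∈ Finset.range (i₀+1), rp i + N * rp i₀ := by
      rw [hn, Finset.sum_range_add]
      have : ∑ i ∈ Finset.range N, rp (i₀ + 1 + i) ≤ ∑ i ∈ Finset.range N, rp i₀ :=
        Finset.sum_le_sum fun i _ => hpmono (by omega)
      rw [Finset.sum_const, Finset.card_range] at this
      have h2 : (N : ℝ) * rp i₀ = N • rp i₀ := (nsmul_eq_mul N (rp i₀)).symm
      linarith [this, h2.le]
    have hq0le : rq 0 ≤ ∑ i ∈ Finset.range n, rq i :=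
      Finset.single_le_sum (f := rq) (fun i _ => hrq0 i) (Finset.mem_range.2 (by omega))
    have := hmaj n
    linarith
  -- total sums are 1
  have hSrp : HasSum rp 1 := layercake hp hrp0 hpcard
  have hSrq : HasSum rq 1 := layercake hq hrq0 hqcard
  -- tails comparison
  have hTle : ∀ j : ℕ, (∑' i : ℕ, if j < i then ENNReal.ofReal (rp i) else 0)
      ≤ (∑' i : ℕ, if j < i then ENNReal.ofReal (rq i) else 0) := by
    intro j
    have h1 := tail_eq rp hrp0 hSrp j
    have h2 := tail_eq rq hrq0 hSrq j
    have hfin : (∑ i ∈ Finset.range (j+1), ENNReal.ofReal (rq i)) ≠ ⊤ :=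
      (ENNReal.sum_lt_top.2 fun i _ => ENNReal.ofReal_lt_top).ne
    have hQP : (∑ i ∈ Finset.range (j+1), ENNReal.ofReal (rq i))
        ≤ (∑ i ∈ Finset.range (j+1), ENNReal.ofReal (rp i)) := by
      rw [← ENNReal.ofReal_sum_of_nonneg (fun i _ => hrq0 i),
        ← ENNReal.ofReal_sum_of_nonneg (fun i _ => hrp0 i)]
      exact ENNReal.ofReal_le_ofReal (hmaj (j+1))
    have hle : (∑ i ∈ Finset.range (j+1), ENNReal.ofReal (rq i))
          + (∑' i : ℕ, if j < i then ENNReal.ofReal (rp i) else 0)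
        ≤ (∑ i ∈ Finset.range (j+1), ENNReal.ofReal (rq i))
          + (∑' i : ℕ, if j < i then ENNReal.ofReal (rq i) else 0) := by
      rw [h2]
      exact le_trans (add_le_add hQP le_rfl) (le_of_eq h1)
    exact (ENNReal.add_le_add_iff_left hfin).1 hle
  have hfinal : ∑' i : ℕ, ENNReal.ofReal (rp i * lamt i)
      ≤ ∑' i : ℕ, ENNReal.ofReal (rq i * lamt i) := by
    rw [key_repr rp hrp0, key_repr rq hrq0]
    exact ENNReal.tsum_le_tsum fun j => mul_le_mul_right (hTle j) _
  by_cases hsp : Summable (fun i => rp i * lamt i)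
  · rw [← ENNReal.ofReal_tsum_of_nonneg (fun i => mul_nonneg (hrp0 i) (lamt_nonneg i)) hsp,
      ← ENNReal.ofReal_tsum_of_nonneg (fun i => mul_nonneg (hrq0 i) (lamt_nonneg i)) hsq] at hfinal
    exact (ENNReal.ofReal_le_ofReal_iff
      (tsum_nonneg fun i => mul_nonneg (hrq0 i) (lamt_nonneg i))).1 hfinal
  · rw [tsum_eq_zero_of_not_summable hsp]
    exact tsum_nonneg fun i => mul_nonneg (hrq0 i) (lamt_nonneg i)
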